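/- arXiv:2107.03355 — 3 statements merged into one kernel-verified Lean document; each statement's English description precedes it below -/
import Mathlib

section
/- Let G be a finitely generated group with word metric, let gP and fQ be left cosets of subgroups P and Q of G. Then for any k > 0 there exists M > 0 such that the intersection of the closed k-neighborhoods N_k(gP) ∩ N_k(fQ) is contained in the closed M-neighborhood N_M(gPg⁻¹ ∩ fQf⁻¹). -/
/-!
A point `x` of `N_k(gP) ∩ N_k(fQ)` satisfies `x a ∈ gP` and `x b ∈ fQ` for some `a, b` in the
`k`-ball, which is finite. Two points `x, y` sharing the same pair `(a, b)` have
`x y⁻¹ = (x a)(y a)⁻¹ ∈ gPg⁻¹` and likewise `x y⁻¹ ∈ fQf⁻¹`. So fixing one representative `c`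
per pair, every such `x` lies in a right translate `K c` of `K = gPg⁻¹ ∩ fQf⁻¹`, which is within
distance `|c|` of `K`; take `M` the largest of these finitely many lengths.
-/

open scoped Pointwise

variable {G : Type*} [Group G]

/-- Word distance between `g` and `h` with respect to a generating set `S` (values in `ℕ∞`). -/
noncomputable def wordDist (S : Set G) (g h : G) : ℕ∞ :=
  sInf {n : ℕ∞ | ∃ l : List G, (∀ x ∈ l, x ∈ S ∨ x⁻¹ ∈ S) ∧ l.prod = g⁻¹ * h ∧ (l.length : ℕ∞) = n}

/-- Closed `r`-neighbourhood of a subset of `G` in the word metric. -/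
def nbhd (S : Set G) (r : ℕ∞) (A : Set G) : Set G := {g | ∃ a ∈ A, wordDist S g a ≤ r}

/-- Hausdorff distance between subsets of `G` in the word metric. -/
noncomputable def hdist (S : Set G) (A B : Set G) : ℕ∞ :=
  sInf {r : ℕ∞ | A ⊆ nbhd S r B ∧ B ⊆ nbhd S r A}

/-- The conjugate subgroup `g P g⁻¹`. -/
def conjSub (g : G) (P : Subgroup G) : Subgroup G := ConjAct.toConjAct g • P

/-- The collection of all left cosets `gP`, `g ∈ G`, `P ∈ Ps`, as subsets of `G`. -/
def cosetsOf (Ps : Set (Subgroup G)) : Set (Set G) :=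
  {A | ∃ (g : G) (P : Subgroup G), P ∈ Ps ∧ A = g • (P : Set G)}

/-- A collection of subgroups is almost malnormal if any conjugate of a member meets any
member in a finite subgroup, except for the trivial configurations. -/
def AlmostMalnormal (Ps : Set (Subgroup G)) : Prop :=
  ∀ P ∈ Ps, ∀ P' ∈ Ps, ∀ g : G,
    ((conjSub g P ⊓ P' : Subgroup G) : Set G).Finite ∨ (P = P' ∧ g ∈ P)

/-- A collection of subgroups is reduced if commensurability of a member with a conjugate of a
member only happens trivially. -/
def Reduced (Ps : Set (Subgroup G)) : Prop :=
  ∀ P ∈ Ps, ∀ Q ∈ Ps, ∀ g : G, Subgroup.Commensurable P (conjSub g Q) → P = Q ∧ g ∈ P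

section WordMetric

variable (S : Set G)

lemma wordDist_mul_left (z x y : G) : wordDist S (z * x) (z * y) = wordDist S x y := by
  simp only [wordDist, mul_inv_rev, mul_assoc, inv_mul_cancel_left]

lemma wordDist_ne_top (hgen : Subgroup.closure S = ⊤) (x y : G) : wordDist S x y ≠ ⊤ := by
  have hmem : x⁻¹ * y ∈ Submonoid.closure (S ∪ S⁻¹) := by
    rw [← Subgroup.closure_toSubmonoid, hgen]; trivial
  obtain ⟨l, hl, hprod⟩ := Submonoid.exists_list_of_mem_closure hmem
  refine ne_top_of_le_ne_top (ENat.natCast_ne_top l.length)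
    (sInf_le ⟨l, fun a ha => ?_, hprod, rfl⟩)
  simpa [Set.mem_inv] using hl a ha

lemma exists_list_of_wordDist_le {x y : G} {k : ℕ} (h : wordDist S x y ≤ k) :
    ∃ l : List G, (∀ a ∈ l, a ∈ S ∨ a⁻¹ ∈ S) ∧ l.prod = x⁻¹ * y ∧ l.length ≤ k := by
  have hne : {n : ℕ∞ | ∃ l : List G, (∀ a ∈ l, a ∈ S ∨ a⁻¹ ∈ S) ∧
      l.prod = x⁻¹ * y ∧ (l.length : ℕ∞) = n}.Nonempty := by
    by_contra hempty
    rw [Set.not_nonempty_iff_eq_empty] at hempty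
    rw [wordDist, hempty, sInf_empty, top_le_iff] at h
    exact ENat.natCast_ne_top k h
  obtain ⟨l, hl, hprod, hlen⟩ := csInf_mem hne
  exact ⟨l, hl, hprod, by exact_mod_cast hlen.trans_le h⟩

lemma finite_ball (hS : S.Finite) (k : ℕ) : {a : G | wordDist S 1 a ≤ k}.Finite := by
  have : Finite ↥(S ∪ S⁻¹) := (hS.union hS.inv).to_subtype
  refine ((List.finite_length_le ↥(S ∪ S⁻¹) k).image fun l => (l.map (↑)).prod).subset ?_
  intro a ha
  obtain ⟨l, hl, hprod, hlen⟩ := exists_list_of_wordDist_le S ha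
  lift l to List ↥(S ∪ S⁻¹) using fun x hx => by simpa [Set.mem_inv] using hl x hx
  exact ⟨l, by simpa using hlen, by simpa using hprod⟩

lemma nbhd_mono {r s : ℕ∞} (hrs : r ≤ s) (A : Set G) : nbhd S r A ⊆ nbhd S s A :=
  fun _ ⟨a, ha, hd⟩ => ⟨a, ha, hd.trans hrs⟩

lemma mem_nbhd_iff {r : ℕ∞} {A : Set G} {x : G} :
    x ∈ nbhd S r A ↔ ∃ a, wordDist S 1 a ≤ r ∧ x * a ∈ A := by
  constructor
  · rintro ⟨y, hy, hd⟩
    refine ⟨x⁻¹ * y, ?_, by simpa using hy⟩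
    rwa [← wordDist_mul_left S x, mul_one, mul_inv_cancel_left]
  · rintro ⟨a, hd, ha⟩
    exact ⟨x * a, ha, by rwa [← wordDist_mul_left S x, mul_one] at hd⟩

lemma exists_subset_nbhd_of_finite_cover (hgen : Subgroup.closure S = ⊤) {A K C : Set G}
    (hC : C.Finite) (hA : ∀ x ∈ A, ∃ c ∈ C, x * c⁻¹ ∈ K) : ∃ M : ℕ, A ⊆ nbhd S M K := by
  obtain ⟨M, hM⟩ := (hC.image fun c => (wordDist S c 1).toNat).bddAbove
  refine ⟨M, fun x hx => ?_⟩
  obtain ⟨c, hc, hxc⟩ := hA x hx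
  refine ⟨x * c⁻¹, hxc, ?_⟩
  calc wordDist S x (x * c⁻¹) = wordDist S c 1 := by
        simpa using wordDist_mul_left S (x * c⁻¹) c 1
    _ = (wordDist S c 1).toNat := (ENat.natCast_toNat (wordDist_ne_top S hgen c 1)).symm
    _ ≤ M := by exact_mod_cast hM ⟨c, hc, rfl⟩

end WordMetric

lemma mul_inv_mem_conjSub {g a x y : G} {P : Subgroup G} (hx : x * a ∈ g • (P : Set G))
    (hy : y * a ∈ g • (P : Set G)) : x * y⁻¹ ∈ conjSub g P := by
  obtain ⟨p, hp, hxp⟩ := hx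
  obtain ⟨q, hq, hyq⟩ := hy
  rw [conjSub, Subgroup.mem_smul_pointwise_iff_exists]
  refine ⟨p * q⁻¹, mul_mem hp (inv_mem hq), ?_⟩
  simp only [smul_eq_mul] at hxp hyq
  rw [ConjAct.toConjAct_smul, ← mul_inv_cancel_right x a, ← mul_inv_cancel_right y a, ← hxp, ← hyq]
  group

/-- Intersections of neighbourhoods of cosets are contained in a neighbourhood
of the intersection of the corresponding conjugates. -/
theorem nbhd_coset_inter_subset (S : Set G) (hS : S.Finite)
    (hgen : Subgroup.closure S = ⊤) (P Q : Subgroup G) (g f : G) :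
    ∀ k : ℕ, 0 < k → ∃ M : ℕ, 0 < M ∧
      nbhd S k (g • (P : Set G)) ∩ nbhd S k (f • (Q : Set G)) ⊆
        nbhd S M ((conjSub g P ⊓ conjSub f Q : Subgroup G) : Set G) := by
  intro k _
  let X : G × G → Set G := fun p => {x | x * p.1 ∈ g • (P : Set G) ∧ x * p.2 ∈ f • (Q : Set G)}
  let rep : G × G → G := fun p => Classical.epsilon (· ∈ X p)
  have hfin := ((finite_ball S hS k).prod (finite_ball S hS k)).image rep
  obtain ⟨M, hM⟩ := exists_subset_nbhd_of_finite_cover S hgen hfin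
    (A := nbhd S k (g • (P : Set G)) ∩ nbhd S k (f • (Q : Set G)))
    (K := ((conjSub g P ⊓ conjSub f Q : Subgroup G) : Set G)) <| by
    rintro x ⟨hxP, hxQ⟩
    obtain ⟨a, ha, hxa⟩ := (mem_nbhd_iff S).1 hxP
    obtain ⟨b, hb, hxb⟩ := (mem_nbhd_iff S).1 hxQ
    have hc : rep (a, b) ∈ X (a, b) := Classical.epsilon_spec ⟨x, hxa, hxb⟩
    exact ⟨rep (a, b), ⟨(a, b), ⟨ha, hb⟩, rfl⟩,
      mul_inv_mem_conjSub hxa hc.1, mul_inv_mem_conjSub hxb hc.2⟩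
  exact ⟨M + 1, M.succ_pos, hM.trans (nbhd_mono S (by exact_mod_cast M.le_succ) _)⟩
end

section
/- Let P be a finite collection of infinite subgroups of a finitely generated group G. Then P is almost malnormal if and only if for any two left cosets A, B ∈ G/P (cosets gP with g ∈ G, P ∈ P), either A = B or the intersection N_n(A) ∩ N_n(B) of their closed n-neighborhoods is a finite subset of G for every n. -/
open scoped Pointwise

variable {G : Type*} [Group G]

/-! The `n`-neighbourhood of `A` is `A * B_n` with `B_n` the finite `n`-ball, so
`N_n(gP) ∩ N_n(hQ)` is covered by finitely many translates `(gP ∩ hQk) b` with `b, k` in finite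
sets. If `gP ∩ hQk` contains `y₀`, then `y ↦ g⁻¹ y y₀⁻¹ g` embeds it into
`(g⁻¹h) Q (g⁻¹h)⁻¹ ∩ P`, so almost malnormality makes every piece finite unless `gP = hQ`.
Conversely, `gPg⁻¹ ∩ P'` lies within distance `|g|` of both `gP` and `P'`. -/

def wordBall (S : Set G) (n : ℕ) : Set G :=
  {w | ∃ l : List G, (∀ x ∈ l, x ∈ S ∨ x⁻¹ ∈ S) ∧ l.prod = w ∧ l.length ≤ n}

section WordBall

variable {S : Set G}

lemma one_mem_wordBall (n : ℕ) : (1 : G) ∈ wordBall S n :=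
  ⟨[], by simp, rfl, Nat.zero_le n⟩

lemma inv_mem_wordBall {n : ℕ} {w : G} (hw : w ∈ wordBall S n) : w⁻¹ ∈ wordBall S n := by
  obtain ⟨l, hl, rfl, hlen⟩ := hw
  refine ⟨(l.map (·⁻¹)).reverse, ?_, List.prod_inv_reverse l ▸ rfl, by simpa using hlen⟩
  simp only [List.mem_reverse, List.mem_map]
  rintro _ ⟨x, hx, rfl⟩
  simpa [or_comm] using hl x hx

lemma wordBall_finite (hS : S.Finite) (n : ℕ) : (wordBall S n).Finite := by
  have : Finite ↥(S ∪ S⁻¹) := (hS.union hS.inv).to_subtype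
  refine ((List.finite_length_le (↥(S ∪ S⁻¹)) n).image
    fun l => (l.map Subtype.val).prod).subset ?_
  rintro _ ⟨l, hl, rfl, hlen⟩
  lift l to List ↥(S ∪ S⁻¹) using hl
  exact ⟨l, by simpa using hlen, rfl⟩

lemma exists_mem_wordBall (hgen : Subgroup.closure S = ⊤) (g : G) : ∃ n, g ∈ wordBall S n := by
  have hg : g ∈ Submonoid.closure (S ∪ S⁻¹) := by
    rw [← Subgroup.closure_toSubmonoid, hgen]
    exact Subgroup.mem_top g
  obtain ⟨l, hl, rfl⟩ := Submonoid.exists_list_of_mem_closure hg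
  exact ⟨l.length, l, hl, rfl, le_rfl⟩

lemma wordDist_le_iff {g h : G} {n : ℕ} :
    wordDist S g h ≤ n ↔ g⁻¹ * h ∈ wordBall S n := by
  constructor
  · intro hle
    by_contra hcon
    have hlt : (n + 1 : ℕ∞) ≤ wordDist S g h := by
      refine le_sInf ?_
      rintro _ ⟨l, hl, hprod, rfl⟩
      exact_mod_cast not_le.mp fun hlen => hcon ⟨l, hl, hprod, hlen⟩
    have : n + 1 ≤ n := by exact_mod_cast hlt.trans hle
    omega
  · rintro ⟨l, hl, hprod, hlen⟩
    refine le_trans (sInf_le ⟨l, hl, hprod, rfl⟩) ?_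
    exact_mod_cast hlen

lemma nbhd_eq_mul_wordBall (n : ℕ) (A : Set G) : nbhd S n A = A * wordBall S n := by
  ext x
  simp only [nbhd, wordDist_le_iff, Set.mem_mul]
  constructor
  · rintro ⟨a, ha, hb⟩
    exact ⟨a, ha, _, inv_mem_wordBall hb, by group⟩
  · rintro ⟨a, ha, b, hb, rfl⟩
    exact ⟨a, ha, by simpa using inv_mem_wordBall hb⟩

lemma finite_nbhd_inter_nbhd (hS : S.Finite) {A B : Set G}
    (hAB : ∀ k : G, (A ∩ (B * {k})).Finite) (n : ℕ) : (nbhd S n A ∩ nbhd S n B).Finite := by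
  rw [nbhd_eq_mul_wordBall, nbhd_eq_mul_wordBall]
  have hT := wordBall_finite hS n
  refine (hT.biUnion fun b _ => hT.biUnion fun c _ =>
    (hAB (c * b⁻¹)).mul (Set.finite_singleton b)).subset ?_
  rintro _ ⟨⟨a, ha, b, hb, rfl⟩, ⟨a', ha', c, hc, hx⟩⟩
  refine Set.mem_biUnion hb (Set.mem_biUnion hc ⟨a, ⟨ha, a', ha', _, rfl, ?_⟩, b, rfl, rfl⟩)
  change a' * c = a * b at hx
  change a' * (c * b⁻¹) = a
  rw [← mul_assoc, hx, mul_inv_cancel_right]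

end WordBall

lemma mem_conjSub {g x : G} {P : Subgroup G} :
    x ∈ conjSub g P ↔ ∃ p ∈ P, g * p * g⁻¹ = x := by
  simp only [conjSub, Subgroup.mem_smul_pointwise_iff_exists, ConjAct.smul_def,
    ConjAct.ofConjAct_toConjAct]

lemma finite_smul_inter_smul_mul {P Q : Subgroup G} {g h : G}
    (hfin : ((conjSub (g⁻¹ * h) Q ⊓ P : Subgroup G) : Set G).Finite) (k : G) :
    (g • (P : Set G) ∩ (h • (Q : Set G) * {k})).Finite := by
  obtain hempty | ⟨y₀, hy₀⟩ :=
    (g • (P : Set G) ∩ (h • (Q : Set G) * {k})).eq_empty_or_nonempty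
  · exact hempty ▸ Set.finite_empty
  refine (hfin.image fun z => g * z * g⁻¹ * y₀).subset ?_
  obtain ⟨⟨p₀, hp₀, rfl⟩, _, ⟨q₀, hq₀, rfl⟩, _, hk₀, hpq₀⟩ := hy₀
  rintro _ ⟨⟨p, hp, rfl⟩, _, ⟨q, hq, rfl⟩, _, hk, hpq⟩
  rw [Set.mem_singleton_iff.mp hk] at hpq
  rw [Set.mem_singleton_iff.mp hk₀] at hpq₀
  simp only [smul_eq_mul] at hpq₀ hpq ⊢
  have hq_eq : q = h⁻¹ * (g * p) * k⁻¹ := by rw [← hpq]; group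
  have hq₀_eq : q₀ = h⁻¹ * (g * p₀) * k⁻¹ := by rw [← hpq₀]; group
  refine ⟨p * p₀⁻¹, ⟨mem_conjSub.mpr ⟨q * q₀⁻¹, Q.mul_mem hq (Q.inv_mem hq₀), ?_⟩,
    P.mul_mem hp (P.inv_mem hp₀)⟩, by group⟩
  rw [hq_eq, hq₀_eq]
  group

lemma conjSub_inf_subset_nbhd_inter {S : Set G} {g : G} {n : ℕ} (hg : g ∈ wordBall S n)
    (P P' : Subgroup G) :
    ((conjSub g P ⊓ P' : Subgroup G) : Set G) ⊆ nbhd S n (g • (P : Set G)) ∩ nbhd S n P' := by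
  rw [nbhd_eq_mul_wordBall, nbhd_eq_mul_wordBall]
  rintro x ⟨hx, hx'⟩
  obtain ⟨p, hp, rfl⟩ := mem_conjSub.mp hx
  exact ⟨⟨g * p, Set.smul_mem_smul_set hp, g⁻¹, inv_mem_wordBall hg, rfl⟩,
    ⟨_, hx', 1, one_mem_wordBall n, mul_one _⟩⟩

lemma eq_and_mem_of_smul_coe_eq {P Q : Subgroup G} {g : G} (h : g • (P : Set G) = Q) :
    P = Q ∧ g ∈ P := by
  have hg : g ∈ Q := by
    rw [← SetLike.mem_coe, ← h]
    simpa using mem_leftCoset g P.one_mem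
  have hPQ : P = Q := SetLike.coe_injective <| by
    rw [eq_inv_smul_iff.mpr h, leftCoset_mem_leftCoset Q (Q.inv_mem hg)]
  exact ⟨hPQ, hPQ ▸ hg⟩

theorem almostMalnormal_iff_coset_nbhds_general (S : Set G) (hS : S.Finite)
    (hgen : Subgroup.closure S = ⊤) (Ps : Set (Subgroup G)) :
    AlmostMalnormal Ps ↔
      ∀ A ∈ cosetsOf Ps, ∀ B ∈ cosetsOf Ps,
        A = B ∨ ∀ n : ℕ, (nbhd S n A ∩ nbhd S n B).Finite := by
  constructor
  · rintro hmal _ ⟨g, P, hP, rfl⟩ _ ⟨h, Q, hQ, rfl⟩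
    rcases hmal Q hQ P hP (g⁻¹ * h) with hfin | ⟨rfl, hgh⟩
    · exact Or.inr (finite_nbhd_inter_nbhd hS (finite_smul_inter_smul_mul hfin))
    · exact Or.inl ((leftCoset_eq_iff Q).mpr hgh)
  · intro hcos P hP P' hP' g
    obtain ⟨n, hn⟩ := exists_mem_wordBall hgen g
    rcases hcos _ ⟨g, P, hP, rfl⟩ _ ⟨1, P', hP', (one_smul G _).symm⟩ with heq | hfin
    · exact Or.inr (eq_and_mem_of_smul_coe_eq heq)
    · exact Or.inl ((hfin n).subset (conjSub_inf_subset_nbhd_inter hn P P'))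

/-- A finite collection of infinite subgroups is almost malnormal iff distinct
left cosets have finite intersections of all their closed neighbourhoods. -/
theorem almostMalnormal_iff_coset_nbhds (S : Set G) (hS : S.Finite)
    (hgen : Subgroup.closure S = ⊤) (Ps : Set (Subgroup G)) (hPs : Ps.Finite)
    (hinf : ∀ P ∈ Ps, (P : Set G).Infinite) :
    AlmostMalnormal Ps ↔
      ∀ A ∈ cosetsOf Ps, ∀ B ∈ cosetsOf Ps,
        A = B ∨ ∀ n : ℕ, (nbhd S n A ∩ nbhd S n B).Finite :=
  almostMalnormal_iff_coset_nbhds_general S hS hgen Ps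
end

section
/- If P has finite index in its commensurator Comm_G(P), then the commensurator of Comm_G(P) equals Comm_G(P), i.e., Comm_G(Comm_G(P)) = Comm_G(P). -/
open scoped Pointwise

variable {G : Type*} [Group G]

namespace Subgroup.Commensurable

theorem le_commensurator (H : Subgroup G) : H ≤ commensurator H := fun _ hg =>
  (commensurator_mem_iff H _).2 <| by
    rw [conjAct_pointwise_smul_eq_self (le_normalizer hg)]

theorem of_le_of_relIndex_ne_zero {H K : Subgroup G} (hle : H ≤ K) (hfi : H.relIndex K ≠ 0) :
    Commensurable H K :=
  ⟨hfi, by rw [relIndex_eq_one.mpr hle]; exact one_ne_zero⟩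

end Subgroup.Commensurable

/-- If `P` has finite index in its commensurator then the commensurator of the
commensurator of `P` equals the commensurator of `P`. -/
theorem commensurator_commensurator (P : Subgroup G)
    (hfi : P.relIndex (Subgroup.Commensurable.commensurator P) ≠ 0) :
    Subgroup.Commensurable.commensurator (Subgroup.Commensurable.commensurator P) =
      Subgroup.Commensurable.commensurator P :=
  (Subgroup.Commensurable.eq
    (Subgroup.Commensurable.of_le_of_relIndex_ne_zero
      (Subgroup.Commensurable.le_commensurator P) hfi)).symm
end
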